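/- Let n ≥ 2 and let h be an n×n real symmetric positive semidefinite matrix satisfying h i j = 0 whenever i ≠ j and both i, j lie among the first n−1 indices, and h i i > 0 for every i among the first n−1 indices. If the quadratic form ξ ↦ ξᵀ h ξ vanishes at some nonzero vector ξ, then h ξ = 0 and every vector at which the quadratic form vanishes is a scalar multiple of ξ; consequently the rank of h is exactly n − 1. -/

import Mathlib

/-! Since `h` is positive semidefinite, `ζ ⬝ᵥ h *ᵥ ζ = 0` forces `h *ᵥ ζ = 0`. For an arrowhead
matrix with nonzero diagonal, row `i ≠ e` of `h *ᵥ ζ = 0` reads `h i i * ζ i + h i e * ζ e = 0`,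
so a kernel vector is determined by its coordinate `ζ e`. Hence the kernel is a line, and
rank–nullity gives rank `n - 1`. -/

namespace Matrix

variable {K : Type*} [Field K]

def IsArrowhead {ι : Type*} (h : Matrix ι ι K) (e : ι) : Prop :=
  ∀ i j, i ≠ j → i ≠ e → j ≠ e → h i j = 0

theorem rank_eq_card_sub_one_of_ker_eq_span {m n : Type*} [Fintype n] {A : Matrix m n K}
    {ξ : n → K} (hker : LinearMap.ker A.mulVecLin = K ∙ ξ) (hξ : ξ ≠ 0) :
    A.rank = Fintype.card n - 1 := by
  have hnullity := LinearMap.finrank_range_add_finrank_ker A.mulVecLin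
  rw [hker, finrank_span_singleton hξ, Module.finrank_fintype_fun_eq_card] at hnullity
  exact Nat.eq_sub_of_add_eq hnullity

namespace IsArrowhead

variable {ι : Type*} [Fintype ι] {h : Matrix ι ι K} {e : ι}

theorem mulVec_apply_of_ne (hh : h.IsArrowhead e) (v : ι → K) {i : ι} (hi : i ≠ e) :
    (h *ᵥ v) i = h i i * v i + h i e * v e := by
  classical
  refine Finset.sum_eq_add_of_mem i e (Finset.mem_univ _) (Finset.mem_univ _) hi ?_
  rintro j - ⟨hji, hje⟩
  exact mul_eq_zero_of_left (hh i j (Ne.symm hji) hi hje) _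

theorem eq_zero_of_mulVec_eq_zero (hh : h.IsArrowhead e) (hdiag : ∀ i ≠ e, h i i ≠ 0)
    {v : ι → K} (hv : h *ᵥ v = 0) (hve : v e = 0) : v = 0 := by
  funext i
  by_cases hi : i = e
  · rw [hi, hve, Pi.zero_apply]
  · have hrow := hh.mulVec_apply_of_ne v hi
    rw [hv, hve, mul_zero, add_zero] at hrow
    exact (mul_eq_zero.mp hrow.symm).resolve_left (hdiag i hi)

theorem ker_mulVecLin_eq_span (hh : h.IsArrowhead e) (hdiag : ∀ i ≠ e, h i i ≠ 0)
    {ξ : ι → K} (hξ : h *ᵥ ξ = 0) (hξ0 : ξ ≠ 0) :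
    LinearMap.ker h.mulVecLin = K ∙ ξ := by
  have hξe : ξ e ≠ 0 := fun he ↦ hξ0 (hh.eq_zero_of_mulVec_eq_zero hdiag hξ he)
  refine le_antisymm (fun ζ hζ ↦ ?_) ((Submodule.span_singleton_le_iff_mem _ _).mpr hξ)
  rw [LinearMap.mem_ker, mulVecLin_apply] at hζ
  -- `ξ e • ζ - ζ e • ξ` is a kernel vector vanishing at `e`.
  have hcomb : ξ e • ζ - ζ e • ξ = 0 :=
    hh.eq_zero_of_mulVec_eq_zero hdiag (by simp [mulVec_sub, mulVec_smul, hζ, hξ])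
      (by simp [mul_comm])
  refine Submodule.mem_span_singleton.mpr ⟨ζ e / ξ e, ?_⟩
  rw [sub_eq_zero] at hcomb
  rw [div_eq_inv_mul, mul_smul, ← hcomb, smul_smul, inv_mul_cancel₀ hξe, one_smul]

end IsArrowhead

end Matrix

open Matrix in
theorem stmt_8_general (n : ℕ) (h : Matrix (Fin n) (Fin n) ℝ)
    (hdiag : ∀ i j : Fin n, i ≠ j → (i : ℕ) < n - 1 → (j : ℕ) < n - 1 → h i j = 0)
    (hpos : ∀ i : Fin n, (i : ℕ) < n - 1 → 0 < h i i)
    (hpsd : h.PosSemidef)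
    (ξ : Fin n → ℝ) (hξ : ξ ≠ 0)
    (hQ : dotProduct ξ (h.mulVec ξ) = 0) :
    h.mulVec ξ = 0 ∧
    (∀ ζ : Fin n → ℝ, dotProduct ζ (h.mulVec ζ) = 0 → ∃ c : ℝ, ζ = c • ξ) ∧
    h.rank = n - 1 := by
  have hn : 0 < n := Fin.pos_iff_nonempty.mpr ⟨(Function.ne_iff.mp hξ).choose⟩
  set e : Fin n := ⟨n - 1, by omega⟩
  have hne : ∀ i : Fin n, i ≠ e ↔ (i : ℕ) < n - 1 := fun i ↦ by
    rw [Ne, Fin.ext_iff, show (e : ℕ) = n - 1 from rfl]; omega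
  have harrow : h.IsArrowhead e := fun i j hij hi hj ↦
    hdiag i j hij ((hne i).mp hi) ((hne j).mp hj)
  have hdiag_ne : ∀ i ≠ e, h i i ≠ 0 := fun i hi ↦ (hpos i ((hne i).mp hi)).ne'
  have hker : ∀ ζ : Fin n → ℝ, ζ ⬝ᵥ h *ᵥ ζ = 0 → h *ᵥ ζ = 0 := fun ζ hζ ↦
    (hpsd.dotProduct_mulVec_zero_iff ζ).mp (by simpa using hζ)
  have hspan := harrow.ker_mulVecLin_eq_span hdiag_ne (hker ξ hQ) hξ
  refine ⟨hker ξ hQ, fun ζ hζ ↦ ?_, by simpa using rank_eq_card_sub_one_of_ker_eq_span hspan hξ⟩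
  have hζ_mem : ζ ∈ ℝ ∙ ξ := hspan ▸ hker ζ hζ
  obtain ⟨c, hc⟩ := Submodule.mem_span_singleton.mp hζ_mem
  exact ⟨c, hc.symm⟩

/-- At a singular point of a positive semidefinite "arrowhead" matrix, the zero
eigenvalue is simple: any null vector of the quadratic form lies in the kernel,
the null directions form a line, and the rank is exactly `n − 1`. -/
theorem stmt_8 (n : ℕ) (hn : 2 ≤ n) (h : Matrix (Fin n) (Fin n) ℝ)
    (hdiag : ∀ i j : Fin n, i ≠ j → (i : ℕ) < n - 1 → (j : ℕ) < n - 1 → h i j = 0)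
    (hpos : ∀ i : Fin n, (i : ℕ) < n - 1 → 0 < h i i)
    (hpsd : h.PosSemidef)
    (ξ : Fin n → ℝ) (hξ : ξ ≠ 0)
    (hQ : dotProduct ξ (h.mulVec ξ) = 0) :
    h.mulVec ξ = 0 ∧
    (∀ ζ : Fin n → ℝ, dotProduct ζ (h.mulVec ζ) = 0 → ∃ c : ℝ, ζ = c • ξ) ∧
    h.rank = n - 1 :=
  stmt_8_general n h hdiag hpos hpsd ξ hξ hQ
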